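/- Fix d ≥ 1 and let λ be a partition of n with at most d parts. Then, as rational functions of β: (−1)^{n} · G_λ(y_λ|y) evaluated at y_i = i for all i ≥ 1 equals ∏_{i=1}^{d} (1+β(λ_i+d−i+1))^{−λ_i} · ∏_{(i,j)∈λ} h(i,j). -/

import Mathlib

open Finset

namespace HookG

/-- Cells of the skew diagram λ/μ (0-indexed). -/
def skewCells (lam mu : YoungDiagram) : Finset (ℕ × ℕ) := lam.cells \ mu.cells

/-- The maximal entry `m(T)` of a tableau (which is 0 outside the shape). -/
def maxEntry (lam mu : YoungDiagram) (T : ℕ × ℕ → ℕ) : ℕ := (skewCells lam mu).sup T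

/-- `T` is a filling of λ/μ by positive integers, strictly increasing along rows and
down columns, and zero outside of λ/μ. -/
def IsIncreasing (lam mu : YoungDiagram) (T : ℕ × ℕ → ℕ) : Prop :=
  (∀ u, u ∉ skewCells lam mu → T u = 0) ∧
  (∀ u ∈ skewCells lam mu, 1 ≤ T u) ∧
  (∀ i j₁ j₂, j₁ < j₂ → (i, j₁) ∈ skewCells lam mu → (i, j₂) ∈ skewCells lam mu →
      T (i, j₁) < T (i, j₂)) ∧
  (∀ i₁ i₂ j, i₁ < i₂ → (i₁, j) ∈ skewCells lam mu → (i₂, j) ∈ skewCells lam mu →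
      T (i₁, j) < T (i₂, j))

/-- Standard increasing tableau: the set of entries is exactly `{1, …, m(T)}`. -/
def IsSIT (lam mu : YoungDiagram) (T : ℕ × ℕ → ℕ) : Prop :=
  IsIncreasing lam mu T ∧
  ∀ k, 1 ≤ k → k ≤ maxEntry lam mu T → ∃ u ∈ skewCells lam mu, T u = k

/-- `ν_{i+1}(T_{<k})` (for the 0-indexed row `i`): the number of cells in row `i` of the
diagram consisting of μ together with the cells of `T` carrying an entry < k. -/
def nuRow (lam mu : YoungDiagram) (T : ℕ × ℕ → ℕ) (k i : ℕ) : ℕ :=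
  (lam.cells.filter fun u => u.1 = i ∧ (u ∈ mu.cells ∨ (1 ≤ T u ∧ T u < k))).card

/-- Hook length of the (0-indexed) cell `u = (i,j)` of λ:
`h = λ_{i+1} + λ'_{j+1} - i - j - 1` (1-indexed: `λ_i − j + λ'_j − i + 1`). -/
def hook (lam : YoungDiagram) (u : ℕ × ℕ) : ℕ :=
  lam.rowLen u.1 + lam.colLen u.2 - u.1 - u.2 - 1

/-- `|T|`, the sum of the entries of a tableau. -/
def entrySum (lam mu : YoungDiagram) (T : ℕ × ℕ → ℕ) : ℕ := ∑ u ∈ skewCells lam mu, T u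

/-- `a(T_{≥k})`, the number of cells of `T` with entry ≥ k. -/
def aGe (lam mu : YoungDiagram) (T : ℕ × ℕ → ℕ) (k : ℕ) : ℕ :=
  ((skewCells lam mu).filter fun u => k ≤ T u).card

/-- The cell `(i,j)` of `D` is active: `(i+1,j), (i,j+1), (i+1,j+1)` all belong to `λ ∖ D`. -/
def ActiveCell (lam : YoungDiagram) (D : Finset (ℕ × ℕ)) (i j : ℕ) : Prop :=
  (i, j) ∈ D ∧
  ((i + 1, j) ∈ lam.cells ∧ (i + 1, j) ∉ D) ∧
  ((i, j + 1) ∈ lam.cells ∧ (i, j + 1) ∉ D) ∧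
  ((i + 1, j + 1) ∈ lam.cells ∧ (i + 1, j + 1) ∉ D)

/-- An excited move of type I (replace the active cell by `(i+1,j+1)`)
or of type II (add `(i+1,j+1)` keeping the active cell). -/
def GenMove (lam : YoungDiagram) (D D' : Finset (ℕ × ℕ)) : Prop :=
  ∃ i j, ActiveCell lam D i j ∧
    (D' = insert (i + 1, j + 1) (D.erase (i, j)) ∨ D' = insert (i + 1, j + 1) D)

/-- The set `D(λ/μ)` of generalized excited diagrams: all subsets of λ obtained from the
Young diagram of μ by sequences of excited moves of both types. -/
def GenExcited (lam mu : YoungDiagram) : Set (Finset (ℕ × ℕ)) :=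
  {D | Relation.ReflTransGen (GenMove lam) mu.cells D}

end HookG

namespace HookG

variable {K : Type*} [Field K]

/-- `x ⊕ y = x + y + βxy`. -/
def oplus (β a b : K) : K := a + b + β * a * b

/-- `⊖ v = (0 − v)/(1 + βv)`. -/
noncomputable def ominus (β v : K) : K := (0 - v) / (1 + β * v)

/-- `[x|y]^k = (x ⊕ y₁)(x ⊕ y₂)⋯(x ⊕ y_k)`. -/
def bracket (β : K) (y : ℕ → K) (x : K) (k : ℕ) : K :=
  ∏ t ∈ Finset.range k, oplus β x (y (t + 1))

/-- The factorial Grothendieck polynomial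
`G_μ(x₁,…,x_d|y) = det([x_i|y]^{μ_j+d−j}(1+βx_i)^{j−1})_{i,j=1}^d / ∏_{i<j}(x_i−x_j)`. -/
noncomputable def Gfact (d : ℕ) (β : K) (y : ℕ → K) (mu : YoungDiagram) (x : Fin d → K) : K :=
  Matrix.det (Matrix.of fun i j : Fin d =>
      bracket β y (x i) (mu.rowLen j + (d - 1 - (j : ℕ))) * (1 + β * x i) ^ (j : ℕ))
    / ∏ i : Fin d, ∏ j ∈ Finset.Ioi i, (x i - x j)

/-- The evaluation point `y_λ = (⊖y_{λ₁+d}, ⊖y_{λ₂+d−1}, …, ⊖y_{λ_d+1})`. -/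
noncomputable def yPoint (d : ℕ) (β : K) (y : ℕ → K) (lam : YoungDiagram) : Fin d → K :=
  fun i => ominus β (y (lam.rowLen i + (d - (i : ℕ))))

/-- `ν ↦ μ`: the skew shape ν/μ is nonempty and its cells lie in pairwise distinct
rows and pairwise distinct columns. -/
def VMapsTo (nu mu : YoungDiagram) : Prop :=
  mu ≤ nu ∧ nu ≠ mu ∧
  ∀ u ∈ nu.cells \ mu.cells, ∀ v ∈ nu.cells \ mu.cells, u ≠ v → u.1 ≠ v.1 ∧ u.2 ≠ v.2

/-- The Young diagram of the partition `(1)`. -/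
def oneBox : YoungDiagram where
  cells := {(0, 0)}
  isLowerSet := by
    intro a b hba ha
    simp only [Finset.coe_singleton, Set.mem_singleton_iff] at ha ⊢
    subst ha
    exact Prod.ext_iff.mpr ⟨Nat.le_zero.mp hba.1, Nat.le_zero.mp hba.2⟩

end HookG
open HookG

noncomputable def β : RatFunc ℚ := RatFunc.X

/-- The substitution `y_i = i` (as elements of ℚ(β)). -/
noncomputable def yNat : ℕ → RatFunc ℚ := fun i => (i : RatFunc ℚ)

section Aux
open HookG Nat

/-- `a_i = λ_{i+1} + d - 1 - i` (0-indexed). -/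
def aa (lam : YoungDiagram) (d i : ℕ) : ℕ := lam.rowLen i + (d - 1 - i)

/-- `g j = j + d - λ'_{j+1}`. -/
def gg (lam : YoungDiagram) (d j : ℕ) : ℕ := j + (d - lam.colLen j)

lemma gg_strictMono (lam : YoungDiagram) (d : ℕ) : StrictMono (gg lam d) := by
  apply strictMono_nat_of_lt_succ
  intro j
  have h := lam.colLen_anti j (j+1) (by omega)
  have : d - lam.colLen j ≤ d - lam.colLen (j+1) := Nat.sub_le_sub_left h d
  unfold gg; omega

lemma aa_lt (lam : YoungDiagram) (d : ℕ) {i k : ℕ} (h : i < k) (hk : k < d) :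
    aa lam d k < aa lam d i := by
  have := lam.rowLen_anti i k h.le
  unfold aa; omega

lemma gg_lt_aa (lam : YoungDiagram) {d : ℕ} (hl : lam.colLen 0 ≤ d) {i j : ℕ}
    (hij : j < lam.rowLen i) (hid : i < d) : gg lam d j < aa lam d i := by
  have hc : i < lam.colLen j := YoungDiagram.mem_iff_lt_colLen.mp
    (YoungDiagram.mem_iff_lt_rowLen.mpr hij)
  have hcd : lam.colLen j ≤ d := le_trans (lam.colLen_anti 0 j (by omega)) hl
  unfold gg aa; omega

lemma gg_ne_aa (lam : YoungDiagram) {d : ℕ} (hl : lam.colLen 0 ≤ d) {i j k : ℕ}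
    (hij : j < lam.rowLen i) (hik : i < k) (hkd : k < d) :
    gg lam d j ≠ aa lam d k := by
  have hcd : lam.colLen j ≤ d := le_trans (lam.colLen_anti 0 j (by omega)) hl
  by_cases hm : (k, j) ∈ lam
  · have h1 : j < lam.rowLen k := YoungDiagram.mem_iff_lt_rowLen.mp hm
    have h2 : k < lam.colLen j := YoungDiagram.mem_iff_lt_colLen.mp hm
    unfold gg aa; omega
  · have h1 : lam.rowLen k ≤ j := by
      by_contra h; exact hm (YoungDiagram.mem_iff_lt_rowLen.mpr (by omega))
    have h2 : lam.colLen j ≤ k := by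
      by_contra h; exact hm (YoungDiagram.mem_iff_lt_colLen.mpr (by omega))
    unfold gg aa; omega

lemma prod_range_sub' (m : ℕ) : ∏ t ∈ range m, (m - t) = m ! := by
  induction m with
  | zero => simp
  | succ m ih =>
    rw [Finset.prod_range_succ' (fun t => m + 1 - t)]
    simp only [Nat.succ_sub_succ]
    rw [ih, Nat.sub_zero, Nat.factorial_succ, Nat.mul_comm]

lemma row_identity (lam : YoungDiagram) {d : ℕ} (hl : lam.colLen 0 ≤ d) {i : ℕ} (hid : i < d) :
    (∏ j ∈ range (lam.rowLen i), hook lam (i, j)) *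
      (∏ k ∈ Ico (i+1) d, (aa lam d i - aa lam d k)) = (aa lam d i)! := by
  set S1 := (range (lam.rowLen i)).image (gg lam d) with hS1
  set S2 := ((Ico (i+1) d)).image (aa lam d) with hS2
  have hginj : Set.InjOn (gg lam d) (range (lam.rowLen i)) :=
    (gg_strictMono lam d).injective.injOn
  have hainj : Set.InjOn (aa lam d) (Ico (i+1) d) := by
    intro x hx y hy hxy
    simp only [coe_Ico, Set.mem_Ico] at hx hy
    by_contra hne
    rcases Nat.lt_or_ge x y with h | h
    · have := aa_lt lam d h hy.2; omega
    · have hyx : y < x := by omega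
      have := aa_lt lam d hyx hx.2; omega
  have hdisj : Disjoint S1 S2 := by
    rw [Finset.disjoint_left]
    rintro x hx1 hx2
    simp only [hS1, hS2, mem_image, mem_range, mem_Ico] at hx1 hx2
    obtain ⟨j, hj, rfl⟩ := hx1
    obtain ⟨k, hk, hk2⟩ := hx2
    exact gg_ne_aa lam hl hj hk.1 hk.2 hk2.symm
  have hsub : S1 ∪ S2 ⊆ range (aa lam d i) := by
    intro x hx
    rcases Finset.mem_union.mp hx with hx | hx <;>
      simp only [hS1, hS2, mem_image, mem_range, mem_Ico] at hx ⊢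
    · obtain ⟨j, hj, rfl⟩ := hx; exact gg_lt_aa lam hl hj hid
    · obtain ⟨k, hk, rfl⟩ := hx; exact aa_lt lam d hk.1 hk.2
  have hcard : (S1 ∪ S2).card = aa lam d i := by
    rw [Finset.card_union_of_disjoint hdisj, hS1, hS2,
      Finset.card_image_of_injOn hginj, Finset.card_image_of_injOn hainj,
      Finset.card_range, Nat.card_Ico]
    unfold aa; omega
  have hUnion : S1 ∪ S2 = range (aa lam d i) :=
    Finset.eq_of_subset_of_card_le hsub (by rw [hcard, Finset.card_range])
  have key : ∏ t ∈ S1 ∪ S2, (aa lam d i - t) = (aa lam d i)! := by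
    rw [hUnion, prod_range_sub']
  rw [Finset.prod_union hdisj, hS1, hS2, Finset.prod_image hginj, Finset.prod_image hainj] at key
  rw [← key]
  congr 1
  apply Finset.prod_congr rfl
  intro j hj
  simp only [mem_range] at hj
  have hc : i < lam.colLen j := YoungDiagram.mem_iff_lt_colLen.mp
    (YoungDiagram.mem_iff_lt_rowLen.mpr hj)
  have hcd : lam.colLen j ≤ d := le_trans (lam.colLen_anti 0 j (by omega)) hl
  unfold hook gg aa; simp only; omega

lemma cells_eq_biUnion (lam : YoungDiagram) {d : ℕ} (hl : lam.colLen 0 ≤ d) :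
    lam.cells = (range d).biUnion (fun i => (range (lam.rowLen i)).image (Prod.mk i)) := by
  ext ⟨i, j⟩
  simp only [mem_biUnion, mem_range, mem_image, YoungDiagram.mem_cells]
  constructor
  · intro h
    have hj : j < lam.rowLen i := YoungDiagram.mem_iff_lt_rowLen.mp h
    have hi : i < lam.colLen 0 := YoungDiagram.mem_iff_lt_colLen.mp
      (lam.up_left_mem (le_refl i) (Nat.zero_le j) h)
    exact ⟨i, by omega, j, hj, rfl⟩
  · rintro ⟨i', _, j', hj', h⟩
    obtain ⟨rfl, rfl⟩ := Prod.mk_inj.mp h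
    exact YoungDiagram.mem_iff_lt_rowLen.mpr hj'

lemma cells_prod {M : Type*} [CommMonoid M] (lam : YoungDiagram) {d : ℕ}
    (hl : lam.colLen 0 ≤ d) (f : ℕ × ℕ → M) :
    ∏ u ∈ lam.cells, f u = ∏ i ∈ range d, ∏ j ∈ range (lam.rowLen i), f (i, j) := by
  rw [cells_eq_biUnion lam hl, Finset.prod_biUnion]
  · apply Finset.prod_congr rfl
    intro i _
    rw [Finset.prod_image (fun x _ y _ h => by simpa using (Prod.mk_inj.mp h).2)]
  · intro x _ y _ hxy
    simp only [Function.onFun, Finset.disjoint_left]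
    rintro u hu hv
    simp only [mem_image, mem_range] at hu hv
    obtain ⟨j, _, rfl⟩ := hu
    obtain ⟨j', _, h⟩ := hv
    exact hxy ((Prod.mk_inj.mp h).1.symm ▸ rfl)

lemma card_eq_sum_rowLen (lam : YoungDiagram) {d : ℕ} (hl : lam.colLen 0 ≤ d) :
    lam.card = ∑ i ∈ range d, lam.rowLen i := by
  change lam.cells.card = _
  rw [cells_eq_biUnion lam hl, Finset.card_biUnion]
  · apply Finset.sum_congr rfl
    intro i _
    rw [Finset.card_image_of_injective _ (fun a b h => (Prod.mk_inj.mp h).2),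
      Finset.card_range]
  · intro x _ y _ hxy
    simp only [Finset.disjoint_left]
    rintro u hu hv
    simp only [mem_image, mem_range] at hu hv
    obtain ⟨j, _, rfl⟩ := hu
    obtain ⟨j', _, h⟩ := hv
    exact hxy ((Prod.mk_inj.mp h).1.symm ▸ rfl)

lemma hook_identity (lam : YoungDiagram) {d : ℕ} (hl : lam.colLen 0 ≤ d) :
    (∏ u ∈ lam.cells, hook lam u) *
      (∏ i ∈ range d, ∏ k ∈ Ico (i+1) d, (aa lam d i - aa lam d k)) =
      ∏ i ∈ range d, (aa lam d i)! := by
  rw [cells_prod lam hl, ← Finset.prod_mul_distrib]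
  exact Finset.prod_congr rfl (fun i hi => row_identity lam hl (mem_range.mp hi))

section FieldAux

variable {K : Type*} [Field K]

lemma oplus_ominus (b c t : K) (hc : 1 + b * c ≠ 0) :
    oplus b (ominus b c) t = (t - c) / (1 + b * c) := by
  have hx : (0 - c) / (1 + b * c) * (1 + b * c) = 0 - c := div_mul_cancel₀ _ hc
  unfold oplus ominus; rw [eq_div_iff hc]; linear_combination (1 + b * t) * hx

lemma one_add_mul_ominus (b c : K) (hc : 1 + b * c ≠ 0) :
    1 + b * ominus b c = (1 + b * c)⁻¹ := by
  unfold ominus; field_simp; ring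

lemma ominus_sub (b c c' : K) (hc : 1 + b * c ≠ 0) (hc' : 1 + b * c' ≠ 0) :
    ominus b c - ominus b c' = (c' - c) / ((1 + b * c) * (1 + b * c')) := by
  have hx : (0 - c) / (1 + b * c) * (1 + b * c) = 0 - c := div_mul_cancel₀ _ hc
  have hx' : (0 - c') / (1 + b * c') * (1 + b * c') = 0 - c' := div_mul_cancel₀ _ hc'
  unfold ominus; rw [eq_div_iff (mul_ne_zero hc hc')]
  linear_combination (1 + b * c') * hx - (1 + b * c) * hx'

lemma num_diag (k : ℕ) :
    (∏ t ∈ range k, ((((t+1) : ℕ) : K) - (((k+1) : ℕ) : K))) = (-1)^k * (k ! : K) := by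
  have h : ∀ t ∈ range k, ((((t+1):ℕ):K) - (((k+1):ℕ):K)) = (-1) * (((k - t : ℕ)) : K) := by
    intro t ht; rw [mem_range] at ht
    push_cast [Nat.cast_sub ht.le]; ring
  rw [Finset.prod_congr rfl h, Finset.prod_mul_distrib, Finset.prod_const, ← Nat.cast_prod,
    prod_range_sub', card_range]

end FieldAux

lemma double_prod_fin {M : Type*} [CommMonoid M] (d : ℕ) (F : ℕ → ℕ → M) :
    ∏ i : Fin d, ∏ j ∈ Ioi i, F (i:ℕ) (j:ℕ) = ∏ i ∈ range d, ∏ k ∈ Ico (i+1) d, F i k := by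
  rw [← Fin.prod_univ_eq_prod_range (fun i => ∏ k ∈ Ico (i+1) d, F i k) d]
  apply Finset.prod_congr rfl
  intro i _
  refine Finset.prod_bij (fun (j : Fin d) (_ : j ∈ Ioi i) => (j:ℕ)) ?_ ?_ ?_ ?_
  · intro a ha; rw [mem_Ioi] at ha; rw [mem_Ico]
    exact ⟨Fin.lt_iff_val_lt_val.mp ha, a.isLt⟩
  · intro a _ b _ h; exact Fin.val_injective h
  · intro b hb; rw [mem_Ico] at hb
    exact ⟨⟨b, hb.2⟩, mem_Ioi.mpr (Fin.lt_iff_val_lt_val.mpr hb.1), rfl⟩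
  · intro a _; rfl

lemma w_ne (m : ℕ) : (1 + β * (m : RatFunc ℚ)) ≠ 0 := by
  have h : (1 + β * (m : RatFunc ℚ)) =
      algebraMap (Polynomial ℚ) (RatFunc ℚ) (1 + Polynomial.X * (m : Polynomial ℚ)) := by
    rw [map_add, map_one, map_mul, RatFunc.algebraMap_X, map_natCast]; rfl
  rw [h]
  apply RatFunc.algebraMap_ne_zero
  intro hp
  have := congrArg (Polynomial.eval 0) hp
  simp at this

lemma bracket_eval (lam : YoungDiagram) (d : ℕ) (i : Fin d) (k : ℕ) :
    bracket β yNat (yPoint d β yNat lam i) k =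
      (∏ t ∈ range k, ((((t+1):ℕ) : RatFunc ℚ) -
          ((lam.rowLen i + (d - (i:ℕ)) : ℕ) : RatFunc ℚ))) /
        (1 + β * ((lam.rowLen i + (d - (i:ℕ)) : ℕ) : RatFunc ℚ))^k := by
  have hx : yPoint d β yNat lam i =
      ominus β ((lam.rowLen i + (d - (i:ℕ)) : ℕ) : RatFunc ℚ) := rfl
  rw [hx]
  unfold bracket
  rw [Finset.prod_congr rfl (fun t _ => oplus_ominus β _ (yNat (t+1)) (w_ne _)),
    Finset.prod_div_distrib, Finset.prod_const, card_range]
  rfl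

end Aux

open Nat

/-- Proposition 4.3: for λ ⊢ n with at most d parts,
`(−1)^n · G_λ(y_λ|y)|_{y_i = i} = ∏_{i=1}^d (1+β(λ_i+d−i+1))^{−λ_i} · ∏_{(i,j)∈λ} h(i,j)`,
as rational functions of β. -/
theorem stmt9 (d n : ℕ) (hd : 1 ≤ d) (lam : YoungDiagram) (hn : lam.card = n)
    (hl : lam.colLen 0 ≤ d) :
    (-1 : RatFunc ℚ) ^ n * Gfact d β yNat lam (yPoint d β yNat lam)
      = (∏ i ∈ Finset.range d,
          (1 + β * ((lam.rowLen i + (d - i) : ℕ) : RatFunc ℚ)) ^ lam.rowLen i)⁻¹ *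
        ∏ u ∈ lam.cells, ((hook lam u : RatFunc ℚ)) := by
  classical
  subst hn
  -- abbreviations (as plain functions)
  let w : ℕ → RatFunc ℚ := fun i => 1 + β * ((lam.rowLen i + (d - i) : ℕ) : RatFunc ℚ)
  have hwne : ∀ i : ℕ, w i ≠ 0 := fun i => w_ne _
  have hvA : ∀ i < d, lam.rowLen i + (d - i) = aa lam d i + 1 := by
    intro i hi; unfold aa; omega
  -- the determinant
  have hdet : Matrix.det (Matrix.of fun i j : Fin d =>
        bracket β yNat (yPoint d β yNat lam i) (lam.rowLen (j:ℕ) + (d - 1 - (j : ℕ))) *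
          (1 + β * yPoint d β yNat lam i) ^ (j : ℕ))
      = ∏ i : Fin d, ((-1)^(aa lam d (i:ℕ)) * ((aa lam d (i:ℕ))! : RatFunc ℚ) *
          (w (i:ℕ) ^ (aa lam d (i:ℕ) + (i:ℕ)))⁻¹) := by
    rw [Matrix.det_of_upperTriangular]
    · apply Finset.prod_congr rfl
      intro i _
      simp only [Matrix.of_apply]
      have hki : lam.rowLen (i:ℕ) + (d - 1 - (i:ℕ)) = aa lam d (i:ℕ) := rfl
      rw [hki, bracket_eval lam d i (aa lam d (i:ℕ))]
      have hnum : (∏ t ∈ range (aa lam d (i:ℕ)), ((((t+1):ℕ) : RatFunc ℚ) -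
            ((lam.rowLen (i:ℕ) + (d - (i:ℕ)) : ℕ) : RatFunc ℚ)))
          = (-1)^(aa lam d (i:ℕ)) * ((aa lam d (i:ℕ))! : RatFunc ℚ) := by
        rw [hvA (i:ℕ) i.isLt]
        exact num_diag _
      have hx : yPoint d β yNat lam i =
          ominus β ((lam.rowLen (i:ℕ) + (d - (i:ℕ)) : ℕ) : RatFunc ℚ) := rfl
      rw [hnum, hx, one_add_mul_ominus β _ (w_ne _)]
      show (-1) ^ aa lam d (i:ℕ) * ((aa lam d (i:ℕ))! : RatFunc ℚ) / w (i:ℕ) ^ aa lam d (i:ℕ) *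
          ((w (i:ℕ))⁻¹) ^ (i:ℕ) = _
      rw [pow_add, mul_inv, div_eq_mul_inv, inv_pow]
      ring
    · -- upper triangular
      intro i j hij
      simp only [Matrix.of_apply]
      have hbz : bracket β yNat (yPoint d β yNat lam i)
          (lam.rowLen (j:ℕ) + (d - 1 - (j : ℕ))) = 0 := by
        rw [bracket_eval lam d i]
        have h1 : 1 ≤ lam.rowLen (i:ℕ) + (d - (i:ℕ)) := by
          have := i.isLt; omega
        have h2 : lam.rowLen (i:ℕ) + (d - (i:ℕ)) ≤ lam.rowLen (j:ℕ) + (d - 1 - (j:ℕ)) := by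
          have hji : (j:ℕ) < (i:ℕ) := hij
          have := lam.rowLen_anti (j:ℕ) (i:ℕ) hji.le
          have := i.isLt; omega
        rw [Finset.prod_eq_zero (Finset.mem_range.mpr
          (show lam.rowLen (i:ℕ) + (d - (i:ℕ)) - 1 < lam.rowLen (j:ℕ) + (d - 1 - (j:ℕ)) by omega))]
        · exact zero_div _
        · rw [Nat.sub_add_cancel h1]; exact sub_self _
      rw [hbz, zero_mul]
  -- the denominator
  have hden : (∏ i : Fin d, ∏ j ∈ Finset.Ioi i, (yPoint d β yNat lam i - yPoint d β yNat lam j))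
      = ((-1) ^ (∑ i : Fin d, (d - 1 - (i:ℕ))) *
          ((∏ i ∈ range d, ∏ k ∈ Ico (i+1) d, (aa lam d i - aa lam d k) : ℕ) : RatFunc ℚ)) *
        (∏ i : Fin d, (w (i:ℕ))^(d-1))⁻¹ := by
    have step1 : ∀ i : Fin d, ∀ j ∈ Finset.Ioi i,
        yPoint d β yNat lam i - yPoint d β yNat lam j
          = ((-1) * ((aa lam d (i:ℕ) - aa lam d (j:ℕ) : ℕ) : RatFunc ℚ)) *
            (w (i:ℕ) * w (j:ℕ))⁻¹ := by
      intro i j hj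
      rw [mem_Ioi] at hj
      have hij : (i:ℕ) < (j:ℕ) := hj
      have hx : yPoint d β yNat lam i =
          ominus β ((lam.rowLen (i:ℕ) + (d - (i:ℕ)) : ℕ) : RatFunc ℚ) := rfl
      have hx' : yPoint d β yNat lam j =
          ominus β ((lam.rowLen (j:ℕ) + (d - (j:ℕ)) : ℕ) : RatFunc ℚ) := rfl
      rw [hx, hx', ominus_sub β _ _ (w_ne _) (w_ne _)]
      have haa : aa lam d (j:ℕ) < aa lam d (i:ℕ) := aa_lt lam d hij j.isLt
      have hnum : ((lam.rowLen (j:ℕ) + (d - (j:ℕ)) : ℕ) : RatFunc ℚ) -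
          ((lam.rowLen (i:ℕ) + (d - (i:ℕ)) : ℕ) : RatFunc ℚ)
          = (-1) * ((aa lam d (i:ℕ) - aa lam d (j:ℕ) : ℕ) : RatFunc ℚ) := by
        rw [hvA (i:ℕ) i.isLt, hvA (j:ℕ) j.isLt]
        push_cast [Nat.cast_sub haa.le]
        ring
      rw [hnum, div_eq_mul_inv]
    rw [Finset.prod_congr rfl (fun i _ => Finset.prod_congr rfl (step1 i))]
    have step2 : ∀ i : Fin d,
        ∏ j ∈ Finset.Ioi i, (((-1) * ((aa lam d (i:ℕ) - aa lam d (j:ℕ) : ℕ) : RatFunc ℚ)) *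
            (w (i:ℕ) * w (j:ℕ))⁻¹)
        = ((∏ j ∈ Finset.Ioi i, ((-1) * ((aa lam d (i:ℕ) - aa lam d (j:ℕ) : ℕ) : RatFunc ℚ)))) *
          (∏ j ∈ Finset.Ioi i, (w (i:ℕ) * w (j:ℕ))⁻¹) := fun i => Finset.prod_mul_distrib
    rw [Finset.prod_congr rfl (fun i _ => step2 i), Finset.prod_mul_distrib]
    congr 1
    · -- sign * numerator
      have : ∀ i : Fin d, ∏ j ∈ Finset.Ioi i,
            ((-1) * ((aa lam d (i:ℕ) - aa lam d (j:ℕ) : ℕ) : RatFunc ℚ))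
          = (-1)^(d - 1 - (i:ℕ)) *
            ∏ j ∈ Finset.Ioi i, ((aa lam d (i:ℕ) - aa lam d (j:ℕ) : ℕ) : RatFunc ℚ) := by
        intro i
        rw [Finset.prod_mul_distrib, Finset.prod_const, Fin.card_Ioi]
      rw [Finset.prod_congr rfl (fun i _ => this i), Finset.prod_mul_distrib,
        Finset.prod_pow_eq_pow_sum]
      congr 1
      rw [double_prod_fin d (fun i k => ((aa lam d i - aa lam d k : ℕ) : RatFunc ℚ))]
      push_cast
      rfl
    · -- denominator w-part
      have hsplit : ∀ i : Fin d, ∏ j ∈ Finset.Ioi i, (w (i:ℕ) * w (j:ℕ))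
          = (w (i:ℕ))^(d - 1 - (i:ℕ)) * ∏ j ∈ Finset.Ioi i, w (j:ℕ) := by
        intro i
        rw [Finset.prod_mul_distrib, Finset.prod_const, Fin.card_Ioi]
      have hswap0 : ∏ i : Fin d, ∏ j ∈ Finset.Ioi i, w (j:ℕ)
          = ∏ j : Fin d, ∏ i ∈ Finset.Iio j, w (j:ℕ) :=
        Finset.prod_comm' (fun x y => by
          simp only [Finset.mem_univ, true_and, and_true, Finset.mem_Ioi, Finset.mem_Iio])
      have hswap : ∏ i : Fin d, ∏ j ∈ Finset.Ioi i, w (j:ℕ)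
          = ∏ j : Fin d, (w (j:ℕ))^(j:ℕ) := by
        rw [hswap0]
        exact Finset.prod_congr rfl (fun j _ => by
          rw [Finset.prod_const, Fin.card_Iio])
      have hX : ∏ i : Fin d, ∏ j ∈ Finset.Ioi i, (w (i:ℕ) * w (j:ℕ))
          = ∏ i : Fin d, (w (i:ℕ))^(d-1) := by
        rw [Finset.prod_congr rfl (fun i _ => hsplit i), Finset.prod_mul_distrib, hswap,
          ← Finset.prod_mul_distrib]
        apply Finset.prod_congr rfl
        intro i _
        rw [← pow_add]
        congr 1
        have := i.isLt; omega
      calc ∏ i : Fin d, ∏ j ∈ Finset.Ioi i, (w (i:ℕ) * w (j:ℕ))⁻¹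
          = ∏ i : Fin d, (∏ j ∈ Finset.Ioi i, (w (i:ℕ) * w (j:ℕ)))⁻¹ :=
            Finset.prod_congr rfl (fun i _ => Finset.prod_inv_distrib _)
        _ = (∏ i : Fin d, ∏ j ∈ Finset.Ioi i, (w (i:ℕ) * w (j:ℕ)))⁻¹ :=
            Finset.prod_inv_distrib _
        _ = (∏ i : Fin d, (w (i:ℕ))^(d-1))⁻¹ := by rw [hX]
  -- assemble
  unfold Gfact
  rw [hdet, hden]
  -- more abbreviations
  set E : ℕ := ∑ i : Fin d, (d - 1 - (i:ℕ)) with hE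
  set P : ℕ := ∏ i ∈ range d, ∏ k ∈ Ico (i+1) d, (aa lam d i - aa lam d k) with hP
  set Hn : ℕ := ∏ u ∈ lam.cells, hook lam u with hHn
  have hPpos : 0 < P := by
    rw [hP]
    apply Finset.prod_pos
    intro i hi
    apply Finset.prod_pos
    intro k hk
    rw [mem_Ico] at hk
    rw [mem_range] at hi
    exact Nat.sub_pos_of_lt (aa_lt lam d (by omega) hk.2)
  haveI : CharZero (RatFunc ℚ) :=
    charZero_of_injective_algebraMap (algebraMap ℚ (RatFunc ℚ)).injective
  have hPne : ((P : ℕ) : RatFunc ℚ) ≠ 0 := Nat.cast_ne_zero.mpr hPpos.ne'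
  have hsumA : ∑ i : Fin d, aa lam d (i:ℕ) = lam.card + E := by
    have h1 : ∑ i : Fin d, aa lam d (i:ℕ)
        = ∑ i : Fin d, (lam.rowLen (i:ℕ) + (d - 1 - (i:ℕ))) := rfl
    rw [h1, Finset.sum_add_distrib, hE, card_eq_sum_rowLen lam hl,
      ← Fin.sum_univ_eq_sum_range (fun i => lam.rowLen i) d]
  -- rewrite det product
  have hdetprod : ∏ i : Fin d, ((-1)^(aa lam d (i:ℕ)) * ((aa lam d (i:ℕ))! : RatFunc ℚ) *
        (w (i:ℕ) ^ (aa lam d (i:ℕ) + (i:ℕ)))⁻¹)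
      = ((-1) ^ (lam.card + E) * ((∏ i ∈ range d, (aa lam d i)! : ℕ) : RatFunc ℚ)) *
        ((∏ i : Fin d, (w (i:ℕ))^(lam.rowLen (i:ℕ))) * (∏ i : Fin d, (w (i:ℕ))^(d-1)))⁻¹ := by
    rw [Finset.prod_mul_distrib, Finset.prod_mul_distrib, Finset.prod_pow_eq_pow_sum, hsumA]
    congr 1
    · congr 1
      rw [Nat.cast_prod, ← Fin.prod_univ_eq_prod_range
        (fun i => ((aa lam d i)! : RatFunc ℚ)) d]
    · have hsplit2 : ∀ i : Fin d, (w (i:ℕ)) ^ (aa lam d (i:ℕ) + (i:ℕ))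
          = (w (i:ℕ))^(lam.rowLen (i:ℕ)) * (w (i:ℕ))^(d-1) := by
        intro i
        rw [← pow_add]
        congr 1
        have := i.isLt
        unfold aa; omega
      calc ∏ i : Fin d, ((w (i:ℕ)) ^ (aa lam d (i:ℕ) + (i:ℕ)))⁻¹
          = (∏ i : Fin d, (w (i:ℕ)) ^ (aa lam d (i:ℕ) + (i:ℕ)))⁻¹ := Finset.prod_inv_distrib _
        _ = (∏ i : Fin d, ((w (i:ℕ))^(lam.rowLen (i:ℕ)) * (w (i:ℕ))^(d-1)))⁻¹ := by
            rw [Finset.prod_congr rfl (fun i _ => hsplit2 i)]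
        _ = ((∏ i : Fin d, (w (i:ℕ))^(lam.rowLen (i:ℕ))) *
              (∏ i : Fin d, (w (i:ℕ))^(d-1)))⁻¹ := by rw [Finset.prod_mul_distrib]
  rw [hdetprod]
  -- final algebra
  set W : RatFunc ℚ := ∏ i : Fin d, (w (i:ℕ))^(d-1) with hW
  set Rp : RatFunc ℚ := ∏ i : Fin d, (w (i:ℕ))^(lam.rowLen (i:ℕ)) with hRp
  have hWne : W ≠ 0 := Finset.prod_ne_zero_iff.mpr (fun i _ => pow_ne_zero _ (hwne _))
  have hRpne : Rp ≠ 0 := Finset.prod_ne_zero_iff.mpr (fun i _ => pow_ne_zero _ (hwne _))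
  have hRrange : (∏ i ∈ Finset.range d,
      (1 + β * ((lam.rowLen i + (d - i) : ℕ) : RatFunc ℚ)) ^ lam.rowLen i) = Rp := by
    rw [hRp, ← Fin.prod_univ_eq_prod_range
      (fun i => (1 + β * ((lam.rowLen i + (d - i) : ℕ) : RatFunc ℚ)) ^ lam.rowLen i) d]
  have hHk : (∏ u ∈ lam.cells, ((hook lam u : RatFunc ℚ))) = ((Hn : ℕ) : RatFunc ℚ) := by
    rw [hHn]; push_cast; rfl
  have hFact : ((Hn : ℕ) : RatFunc ℚ) * ((P : ℕ) : RatFunc ℚ)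
      = ((∏ i ∈ range d, (aa lam d i)! : ℕ) : RatFunc ℚ) := by
    rw [← Nat.cast_mul, hHn, hP, hook_identity lam hl]
  rw [hRrange, hHk, ← hFact]
  have hEinv : ((-1 : RatFunc ℚ))^E ≠ 0 := pow_ne_zero _ (by norm_num)
  have hdenne : ((-1 : RatFunc ℚ)) ^ E * ((P : ℕ) : RatFunc ℚ) * W⁻¹ ≠ 0 :=
    mul_ne_zero (mul_ne_zero hEinv hPne) (inv_ne_zero hWne)
  rw [← mul_div_assoc]
  rw [div_eq_iff hdenne]
  have hNN : ((-1 : RatFunc ℚ))^lam.card * (-1)^lam.card = 1 := by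
    rw [← pow_add]
    exact Even.neg_one_pow (Even.add_self lam.card)
  rw [pow_add, mul_inv]
  linear_combination ((-1 : RatFunc ℚ))^E * ((Hn : ℕ) : RatFunc ℚ) * ((P : ℕ) : RatFunc ℚ) *
    Rp⁻¹ * W⁻¹ * hNN
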